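/- Among all orthogonal matrices Ω ∈ ℝ^{m×m}, the quantity ‖F - Ω G‖_F² is minimized when trace(Ωᵀ F Gᵀ) is maximized; in particular, if F Gᵀ = X Σ Yᵀ is an SVD, then Ω* = X Yᵀ is a minimizer of ‖F - Ω G‖_F over orthogonal Ω (the orthogonal Procrustes problem). -/

import Mathlib

/-!
Expanding the square, `‖F - Ω G‖² = ‖F‖² + ‖G‖² - 2 tr(Ωᵀ F Gᵀ)` for orthogonal `Ω`, so it suffices
to maximise `tr(Ωᵀ X S Yᵀ) = tr((Yᵀ Ωᵀ X) S)`. The matrix `Yᵀ Ωᵀ X` is orthogonal, so its diagonal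
entries are at most `1`, and as `S` is diagonal with nonnegative entries the trace is at most
`tr S`, which is attained at `Ω = X Yᵀ`.
-/

open Matrix

/-- Squared Frobenius norm of a real matrix. -/
def frobSq {m n : ℕ} (A : Matrix (Fin m) (Fin n) ℝ) : ℝ :=
  ∑ i, ∑ j, (A i j) ^ 2

section Frobenius

variable {m n : ℕ}

lemma frobSq_eq_trace_transpose_mul (A : Matrix (Fin m) (Fin n) ℝ) :
    frobSq A = (Aᵀ * A).trace := by
  simp only [frobSq, trace, diag, mul_apply, transpose_apply, sq]
  exact Finset.sum_comm

lemma frobSq_sub (A B : Matrix (Fin m) (Fin n) ℝ) :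
    frobSq (A - B) = frobSq A + frobSq B - 2 * (Aᵀ * B).trace := by
  have hBA : (Bᵀ * A).trace = (Aᵀ * B).trace := by
    rw [← trace_transpose, transpose_mul, transpose_transpose]
  simp only [frobSq_eq_trace_transpose_mul, transpose_sub, Matrix.sub_mul, Matrix.mul_sub, trace_sub, hBA]
  ring

lemma frobSq_orthogonal_mul {Ω : Matrix (Fin m) (Fin m) ℝ} (hΩ : Ω ∈ orthogonalGroup (Fin m) ℝ)
    (G : Matrix (Fin m) (Fin n) ℝ) : frobSq (Ω * G) = frobSq G := by
  rw [frobSq_eq_trace_transpose_mul, frobSq_eq_trace_transpose_mul, transpose_mul,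
    Matrix.mul_assoc, ← Matrix.mul_assoc Ωᵀ, (mem_orthogonalGroup_iff' _ _).mp hΩ, Matrix.one_mul]

lemma frobSq_sub_orthogonal_mul (F G : Matrix (Fin m) (Fin n) ℝ) {Ω : Matrix (Fin m) (Fin m) ℝ}
    (hΩ : Ω ∈ orthogonalGroup (Fin m) ℝ) :
    frobSq (F - Ω * G) = frobSq F + frobSq G - 2 * (Ωᵀ * (F * Gᵀ)).trace := by
  have hcross : (Fᵀ * (Ω * G)).trace = (Ωᵀ * (F * Gᵀ)).trace := by
    rw [← Matrix.mul_assoc, trace_mul_cycle, ← trace_transpose]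
    simp only [transpose_mul, transpose_transpose, Matrix.mul_assoc]
  rw [frobSq_sub, frobSq_orthogonal_mul hΩ, hcross]

end Frobenius

section Trace

variable {m : Type*} [Fintype m] [DecidableEq m]

lemma trace_orthogonal_mul_le_trace {U S : Matrix m m ℝ} (hU : U ∈ orthogonalGroup m ℝ)
    (hS : S.IsDiag) (hS₀ : ∀ i, 0 ≤ S i i) : (U * S).trace ≤ S.trace := by
  rw [← hS.diagonal_diag]
  refine Finset.sum_le_sum fun i _ => ?_
  have hUii : U i i ≤ 1 := (le_abs_self _).trans (entry_norm_bound_of_unitary hU i i)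
  simpa [mul_diagonal] using mul_le_of_le_one_left (hS₀ i) hUii

lemma trace_transpose_mul_svd_le {Ω X Y S : Matrix m m ℝ} (hΩ : Ω ∈ orthogonalGroup m ℝ)
    (hX : X ∈ orthogonalGroup m ℝ) (hY : Y ∈ orthogonalGroup m ℝ) (hS : S.IsDiag)
    (hS₀ : ∀ i, 0 ≤ S i i) : (Ωᵀ * (X * S * Yᵀ)).trace ≤ S.trace := by
  have hM : Yᵀ * Ωᵀ * X ∈ orthogonalGroup m ℝ :=
    mul_mem (mul_mem (transpose_mem_unitaryGroup_iff.mpr hY)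
      (transpose_mem_unitaryGroup_iff.mpr hΩ)) hX
  calc (Ωᵀ * (X * S * Yᵀ)).trace = (Yᵀ * Ωᵀ * X * S).trace := by
        rw [← Matrix.mul_assoc, ← Matrix.mul_assoc, trace_mul_cycle]
        simp only [Matrix.mul_assoc]
    _ ≤ S.trace := trace_orthogonal_mul_le_trace hM hS hS₀

lemma trace_transpose_mul_svd_eq {X Y : Matrix m m ℝ} (hX : X ∈ orthogonalGroup m ℝ)
    (hY : Y ∈ orthogonalGroup m ℝ) (S : Matrix m m ℝ) :
    ((X * Yᵀ)ᵀ * (X * S * Yᵀ)).trace = S.trace := by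
  rw [transpose_mul, transpose_transpose, Matrix.mul_assoc, ← Matrix.mul_assoc Xᵀ,
    ← Matrix.mul_assoc Xᵀ, (mem_orthogonalGroup_iff' _ _).mp hX, Matrix.one_mul, ← Matrix.mul_assoc,
    trace_mul_cycle, (mem_orthogonalGroup_iff' _ _).mp hY, Matrix.one_mul]

end Trace

theorem procrustes_minimizer_general {m n : ℕ}
    (F G : Matrix (Fin m) (Fin n) ℝ)
    (X Y S : Matrix (Fin m) (Fin m) ℝ)
    (hX1 : Xᵀ * X = 1)
    (hY1 : Yᵀ * Y = 1)
    (hSdiag : ∀ i j, i ≠ j → S i j = 0)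
    (hSpos : ∀ i, 0 ≤ S i i)
    (hSVD : F * Gᵀ = X * S * Yᵀ) :
    ∀ Ω : Matrix (Fin m) (Fin m) ℝ, Ωᵀ * Ω = 1 → Ω * Ωᵀ = 1 →
      frobSq (F - (X * Yᵀ) * G) ≤ frobSq (F - Ω * G) := by
  intro Ω hΩ1 _
  have hΩ := (mem_orthogonalGroup_iff' _ _).mpr hΩ1
  have hX := (mem_orthogonalGroup_iff' _ _).mpr hX1
  have hY := (mem_orthogonalGroup_iff' _ _).mpr hY1
  have hXY : X * Yᵀ ∈ orthogonalGroup (Fin m) ℝ :=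
    mul_mem hX (transpose_mem_unitaryGroup_iff.mpr hY)
  rw [frobSq_sub_orthogonal_mul F G hΩ, frobSq_sub_orthogonal_mul F G hXY, hSVD,
    trace_transpose_mul_svd_eq hX hY]
  linarith [trace_transpose_mul_svd_le hΩ hX hY (fun i j h => hSdiag i j h) hSpos]

theorem procrustes_minimizer {m n : ℕ}
    (F G : Matrix (Fin m) (Fin n) ℝ)
    (X Y S : Matrix (Fin m) (Fin m) ℝ)
    (hX1 : Xᵀ * X = 1) (hX2 : X * Xᵀ = 1)
    (hY1 : Yᵀ * Y = 1) (hY2 : Y * Yᵀ = 1)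
    (hSdiag : ∀ i j, i ≠ j → S i j = 0)
    (hSpos : ∀ i, 0 ≤ S i i)
    (hSVD : F * Gᵀ = X * S * Yᵀ) :
    ∀ Ω : Matrix (Fin m) (Fin m) ℝ, Ωᵀ * Ω = 1 → Ω * Ωᵀ = 1 →
      frobSq (F - (X * Yᵀ) * G) ≤ frobSq (F - Ω * G) :=
  procrustes_minimizer_general F G X Y S hX1 hY1 hSdiag hSpos hSVD
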